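/- arXiv:1204.5561 — 2 statements merged into one kernel-verified Lean document; each statement's English description precedes it below -/
import Mathlib

section
/- Every finite simple graph belonging to the class SQC is vertex decomposable. -/
open SimpleGraph

variable {V : Type*} {W : Type*}

/-- The open neighborhood `N(x)` of a vertex, as a set. -/
def nbhd (G : SimpleGraph V) (x : V) : Set V := {u | G.Adj x u}

/-- The closed neighborhood `N[x]` of a vertex. -/
def closedNbhd (G : SimpleGraph V) (x : V) : Set V := insert x {u | G.Adj x u}

/-- The degree of a vertex. -/
noncomputable def deg (G : SimpleGraph V) (x : V) : ℕ := (nbhd G x).ncard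

/-- `S` is an independent set of vertices of `G`. -/
def IsIndep (G : SimpleGraph V) (S : Set V) : Prop :=
  ∀ u ∈ S, ∀ w ∈ S, ¬ G.Adj u w

/-- `S` is an independent set contained in `A`, i.e. an independent set of the
induced subgraph of `G` on `A`. -/
def IsIndepOn (G : SimpleGraph V) (A S : Set V) : Prop :=
  S ⊆ A ∧ IsIndep G S

/-- `S` is a maximal independent set of the induced subgraph of `G` on `A`. -/
def IsMaxIndepOn (G : SimpleGraph V) (A S : Set V) : Prop :=
  IsIndepOn G A S ∧ ∀ T : Set V, IsIndepOn G A T → S ⊆ T → S = T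

/-- A graph is well-covered if all its maximal independent sets have the same
cardinality. -/
def WellCovered (G : SimpleGraph V) : Prop :=
  ∀ S T : Set V, IsMaxIndepOn G Set.univ S → IsMaxIndepOn G Set.univ T →
    S.ncard = T.ncard

/-- The independence number `α(G)` of a graph. -/
noncomputable def indepNum (G : SimpleGraph V) : ℕ :=
  sSup {n : ℕ | ∃ S : Set V, IsIndep G S ∧ S.ncard = n}

/-- `VDOn G A` means: the induced subgraph of `G` on `A` is vertex decomposable,
via the recursive graph-theoretic characterization: it has no edges, or there is
a vertex `v ∈ A` such that both `G∖v` and `G∖N[v]` (within `A`) are vertex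
decomposable and no independent set of `G∖N[v]` is a maximal independent set
of `G∖v`. -/
inductive VDOn (G : SimpleGraph V) : Set V → Prop
  | no_edges (A : Set V) (h : ∀ u ∈ A, ∀ w ∈ A, ¬ G.Adj u w) : VDOn G A
  | step (A : Set V) (v : V) (hv : v ∈ A)
      (hdel : VDOn G (A \ {v}))
      (hlk : VDOn G (A \ closedNbhd G v))
      (hshed : ∀ S : Set V, IsIndepOn G (A \ closedNbhd G v) S →
        ¬ IsMaxIndepOn G (A \ {v}) S) : VDOn G A

/-- A graph is vertex decomposable. -/
def VertexDecomposable (G : SimpleGraph V) : Prop := VDOn G Set.univ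

/-- `c` lists the vertices of an `n`-cycle of `G` in cyclic order. -/
def IsCycleMap {n : ℕ} (G : SimpleGraph V) (c : ZMod n → V) : Prop :=
  Function.Injective c ∧ ∀ i : ZMod n, G.Adj (c i) (c (i + 1))

/-- A vertex is simplicial if its closed neighborhood induces a complete graph. -/
def IsSimplicial (G : SimpleGraph V) (x : V) : Prop :=
  ∀ u w : V, G.Adj x u → G.Adj x w → u ≠ w → G.Adj u w

/-- A basic 5-cycle: a 5-cycle containing no two adjacent vertices that both
have degree at least 3 in `G`. -/
def IsBasic5Cycle (G : SimpleGraph V) (c : ZMod 5 → V) : Prop :=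
  IsCycleMap G c ∧ ∀ i : ZMod 5, ¬(3 ≤ deg G (c i) ∧ 3 ≤ deg G (c (i + 1)))

/-- A basic 3-cycle: a 3-cycle containing at least one vertex of degree 2. -/
def IsBasic3Cycle (G : SimpleGraph V) (c : ZMod 3 → V) : Prop :=
  IsCycleMap G c ∧ ∃ i : ZMod 3, deg G (c i) = 2

/-- `x` belongs to a simplex of `G`, i.e. to the closed neighborhood of a
simplicial vertex. -/
def InSimplex (G : SimpleGraph V) (x : V) : Prop :=
  ∃ v : V, IsSimplicial G v ∧ x ∈ closedNbhd G v

/-- `x` lies on a basic 5-cycle of `G`. -/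
def OnBasic5Cycle (G : SimpleGraph V) (x : V) : Prop :=
  ∃ c : ZMod 5 → V, IsBasic5Cycle G c ∧ x ∈ Set.range c

/-- A basic 4-cycle, labelled so that `c 0` and `c 1` are two adjacent vertices
of degree two, and the remaining two vertices `c 2`, `c 3` each belong to a
simplex or to a basic 5-cycle of `G`.  The set `B(Q)` of such a labelled basic
4-cycle is `{c 0, c 1}`. -/
def IsBasic4Cycle (G : SimpleGraph V) (c : ZMod 4 → V) : Prop :=
  IsCycleMap G c ∧ deg G (c 0) = 2 ∧ deg G (c 1) = 2 ∧
    (InSimplex G (c 2) ∨ OnBasic5Cycle G (c 2)) ∧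
    (InSimplex G (c 3) ∨ OnBasic5Cycle G (c 3))

/-- The class `SQC`: the vertex set is partitioned by the closed neighborhoods
of `m` simplicial vertices, the vertex sets of `s` basic 5-cycles and the sets
`B(Q)` of `t` basic 4-cycles. -/
def InSQC (G : SimpleGraph V) : Prop :=
  ∃ (m s t : ℕ) (x : Fin m → V) (c : Fin s → ZMod 5 → V) (q : Fin t → ZMod 4 → V),
    (∀ i, IsSimplicial G (x i)) ∧
    (∀ j, IsBasic5Cycle G (c j)) ∧
    (∀ k, IsBasic4Cycle G (q k)) ∧
    (∀ v : V, ∃! p : Fin m ⊕ Fin s ⊕ Fin t,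
      match p with
      | Sum.inl i => v ∈ closedNbhd G (x i)
      | Sum.inr (Sum.inl j) => v ∈ Set.range (c j)
      | Sum.inr (Sum.inr k) => v = q k 0 ∨ v = q k 1)

/-- The class `SC`: the vertex set is partitioned by the closed neighborhoods
of `m` simplicial vertices and the vertex sets of `s` basic 5-cycles. -/
def InSC (G : SimpleGraph V) : Prop :=
  ∃ (m s : ℕ) (x : Fin m → V) (c : Fin s → ZMod 5 → V),
    (∀ i, IsSimplicial G (x i)) ∧
    (∀ j, IsBasic5Cycle G (c j)) ∧
    (∀ v : V, ∃! p : Fin m ⊕ Fin s,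
      match p with
      | Sum.inl i => v ∈ closedNbhd G (x i)
      | Sum.inr j => v ∈ Set.range (c j))

/-- `{u, w}` is a pendant edge of `G`: an edge incident with a vertex of
degree 1. -/
def PendantEdge (G : SimpleGraph V) (u w : V) : Prop :=
  G.Adj u w ∧ (deg G u = 1 ∨ deg G w = 1)

/-- `P(G)`: vertices incident with pendant edges. -/
def pendantVerts (G : SimpleGraph V) : Set V := {v | ∃ u, PendantEdge G v u}

/-- `C(G)`: vertices lying on basic 5-cycles. -/
def basic5Verts (G : SimpleGraph V) : Set V := {v | OnBasic5Cycle G v}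

/-- The class `PC`: `V(G) = P(G) ∪ C(G)` with `P(G) ∩ C(G) = ∅`, the basic
5-cycles partition `C(G)` (i.e. are pairwise vertex-disjoint), and the pendant
edges form a perfect matching of `P(G)`. -/
def InPC (G : SimpleGraph V) : Prop :=
  pendantVerts G ∪ basic5Verts G = Set.univ ∧
  pendantVerts G ∩ basic5Verts G = ∅ ∧
  (∀ c c' : ZMod 5 → V, IsBasic5Cycle G c → IsBasic5Cycle G c' →
    Set.range c = Set.range c' ∨ Disjoint (Set.range c) (Set.range c')) ∧
  (∀ v ∈ pendantVerts G, ∃! u : V, PendantEdge G v u)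

/-- The induced subgraph of `G` on `B` has no cut vertex: removing any vertex
of `B` leaves it (pre)connected. -/
def NoCutVertexOn (G : SimpleGraph V) (B : Set V) : Prop :=
  ∀ v ∈ B, (G.induce (B \ {v})).Preconnected

/-- `B` is (the vertex set of) a block of `G`: a maximal connected induced
subgraph without a cut vertex. -/
def IsBlockOf (G : SimpleGraph V) (B : Set V) : Prop :=
  B.Nonempty ∧ (G.induce B).Connected ∧ NoCutVertexOn G B ∧
  ∀ B' : Set V, B ⊆ B' → (G.induce B').Connected → NoCutVertexOn G B' → B' = B

/-- The induced subgraph of `G` on `B` is complete. -/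
def IsCompleteOn (G : SimpleGraph V) (B : Set V) : Prop :=
  ∀ u ∈ B, ∀ w ∈ B, u ≠ w → G.Adj u w

/-- The induced subgraph of `G` on `B` is a cycle. -/
def IsCycleOn (G : SimpleGraph V) (B : Set V) : Prop :=
  ∃ n : ℕ, 3 ≤ n ∧ ∃ c : ZMod n → V, Function.Injective c ∧ Set.range c = B ∧
    ∀ i j : ZMod n, G.Adj (c i) (c j) ↔ (j = i + 1 ∨ i = j + 1)

/-- A block-cactus graph: every block is complete or a cycle. -/
def IsBlockCactus (G : SimpleGraph V) : Prop :=
  ∀ B : Set V, IsBlockOf G B → IsCompleteOn G B ∨ IsCycleOn G B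

/-- A cactus graph: connected, and any two (distinct) cycles have at most one
vertex in common. -/
def IsCactus (G : SimpleGraph V) : Prop :=
  G.Connected ∧
  ∀ (n m : ℕ), 3 ≤ n → 3 ≤ m → ∀ (c : ZMod n → V) (c' : ZMod m → V),
    IsCycleMap G c → IsCycleMap G c' →
    Set.range c = Set.range c' ∨ (Set.range c ∩ Set.range c').Subsingleton

/-- `S` is a pendant edge of `G` incident with `v`. -/
def IncidentPendant (G : SimpleGraph V) (v : V) (S : Set V) : Prop :=
  ∃ u, PendantEdge G v u ∧ S = {v, u}

/-- `S` is (the vertex set of) a basic 3-cycle of `G` through `v`. -/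
def IncidentBasic3 (G : SimpleGraph V) (v : V) (S : Set V) : Prop :=
  ∃ c : ZMod 3 → V, IsBasic3Cycle G c ∧ Set.range c = S ∧ v ∈ S

/-- `S` is (the vertex set of) a basic 4-cycle of `G` through `v`. -/
def IncidentBasic4 (G : SimpleGraph V) (v : V) (S : Set V) : Prop :=
  ∃ c : ZMod 4 → V, IsBasic4Cycle G c ∧ Set.range c = S ∧ v ∈ S

/-- `S` is (the vertex set of) a basic 5-cycle of `G` through `v`. -/
def IncidentBasic5 (G : SimpleGraph V) (v : V) (S : Set V) : Prop :=
  ∃ c : ZMod 5 → V, IsBasic5Cycle G c ∧ Set.range c = S ∧ v ∈ S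

/-- `H` is a minor of `G`, witnessed by pairwise disjoint connected branch
sets. -/
def IsMinorOf (H : SimpleGraph W) (G : SimpleGraph V) : Prop :=
  ∃ f : W → Set V,
    (∀ w, (G.induce (f w)).Connected) ∧
    (∀ w w', w ≠ w' → Disjoint (f w) (f w')) ∧
    (∀ w w', H.Adj w w' → ∃ a ∈ f w, ∃ b ∈ f w', G.Adj a b)

/-- Planarity, via Wagner's characterization: a graph is planar iff it has
neither `K₅` nor `K₃,₃` as a minor. -/
def IsPlanar (G : SimpleGraph V) : Prop :=
  ¬ IsMinorOf (⊤ : SimpleGraph (Fin 5)) G ∧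
  ¬ IsMinorOf (completeBipartiteGraph (Fin 3) (Fin 3)) G

/-- The class `W₂`: a well-covered graph such that deleting any vertex leaves a
well-covered graph with the same independence number. -/
def InW2 (G : SimpleGraph V) : Prop :=
  WellCovered G ∧ ∀ x : V,
    WellCovered (G.induce ({x}ᶜ : Set V)) ∧
    _root_.indepNum (G.induce ({x}ᶜ : Set V)) = _root_.indepNum G

/-- The edge relation of the graph `G_n`, on vertex labels `1, …, 3n-1`
(the vertex `x_i` has label `i`). -/
def gnRel (n : ℕ) (a b : ℕ) : Prop :=
  (a = 1 ∧ b = 2) ∨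
  (∃ k : ℕ, 1 ≤ k ∧ k ≤ n - 1 ∧
    ((a = 3 * k - 1 ∧ b = 3 * k) ∨ (a = 3 * k ∧ b = 3 * k + 1) ∨
     (a = 3 * k + 1 ∧ b = 3 * k + 2) ∨ (a = 3 * k + 2 ∧ b = 3 * k - 2))) ∨
  (∃ l : ℕ, 2 ≤ l ∧ l ≤ n - 1 ∧ a = 3 * l - 3 ∧ b = 3 * l)

/-- The graph `G_n`, with vertex set `{x_1, …, x_{3n-1}}`; the vertex `x_i` is
represented by the element of `Fin (3*n-1)` with value `i - 1`. -/
def Gn (n : ℕ) : SimpleGraph (Fin (3 * n - 1)) :=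
  SimpleGraph.fromRel (fun a b => gnRel n (a.1 + 1) (b.1 + 1))

/-- The graph `H_n = G_n ∖ x_{3n-1}`, with vertex set `{x_1, …, x_{3n-2}}`;
the vertex `x_i` is represented by the element of `Fin (3*n-2)` with value
`i - 1`. -/
def Hn (n : ℕ) : SimpleGraph (Fin (3 * n - 2)) :=
  SimpleGraph.fromRel (fun a b => gnRel n (a.1 + 1) (b.1 + 1))


/-!
The proof is an induction over induced subgraphs `G[A]` carrying an `SQC` partition in which
the vertices `q 2`, `q 3` of every basic 4-cycle part lie in simplex or 5-cycle parts of the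
partition itself. If some simplex part `N[x]` contains an edge, a neighbour `v` of `x` is a
shedding vertex because `N[x] ⊆ N[v]`. Otherwise, if there is a basic 5-cycle part, one of its
vertices `c 0` such that `c 1`, `c 3`, `c 4` have degree at most 2 is shedding. In both cases
`G[A] ∖ v` and `G[A] ∖ N[v]` inherit such a partition: simplices shrink to simplices, a
5-cycle either survives or breaks into simplices with at most two vertices (the deleted
vertices of a cycle not containing `v` have degree at least 3, so no two of them are adjacent),
and a basic 4-cycle part either survives or becomes a simplex. If there is no part of either
kind, every simplex is an isolated vertex, so there is no basic 4-cycle part either and `G[A]`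
has no edges.
-/

section Relative

variable {G : SimpleGraph V} {A R : Set V}

def nbhdOn (G : SimpleGraph V) (A : Set V) (x : V) : Set V := {u | u ∈ A ∧ G.Adj x u}

noncomputable def degOn (G : SimpleGraph V) (A : Set V) (x : V) : ℕ := (nbhdOn G A x).ncard

def closedNbhdOn (G : SimpleGraph V) (A : Set V) (x : V) : Set V := insert x (nbhdOn G A x)

def SimplicialOn (G : SimpleGraph V) (A : Set V) (x : V) : Prop :=
  ∀ u ∈ nbhdOn G A x, ∀ w ∈ nbhdOn G A x, u ≠ w → G.Adj u w

structure IsBasic5CycleOn (G : SimpleGraph V) (A : Set V) (c : ZMod 5 → V) : Prop where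
  mem : ∀ i, c i ∈ A
  isCycleMap : IsCycleMap G c
  not_three_le_degOn : ∀ i, ¬(3 ≤ degOn G A (c i) ∧ 3 ≤ degOn G A (c (i + 1)))

structure IsBasic4CycleOn (G : SimpleGraph V) (A : Set V) (q : ZMod 4 → V) : Prop where
  mem : ∀ i, q i ∈ A
  isCycleMap : IsCycleMap G q
  degOn_zero : degOn G A (q 0) = 2
  degOn_one : degOn G A (q 1) = 2

def IsSimplexPart (G : SimpleGraph V) (A S : Set V) : Prop :=
  ∃ x ∈ A, SimplicialOn G A x ∧ S = closedNbhdOn G A x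

def IsCyclePart (G : SimpleGraph V) (A S : Set V) : Prop :=
  ∃ c, IsBasic5CycleOn G A c ∧ S = Set.range c

def IsSCPart (G : SimpleGraph V) (A S : Set V) : Prop :=
  IsSimplexPart G A S ∨ IsCyclePart G A S

/-- Unlike in `InSQC`, `q 2` and `q 3` must lie in simplex or cycle parts of `F` itself:
membership in an arbitrary simplex would not survive deleting vertices. -/
def IsQuadPart (G : SimpleGraph V) (A : Set V) (F : Set (Set V)) (S : Set V) : Prop :=
  ∃ q, IsBasic4CycleOn G A q ∧ S = {q 0, q 1} ∧
    (∃ S₂ ∈ F, IsSCPart G A S₂ ∧ q 2 ∈ S₂) ∧ (∃ S₃ ∈ F, IsSCPart G A S₃ ∧ q 3 ∈ S₃)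

structure IsSQCPartition (G : SimpleGraph V) (A : Set V) (F : Set (Set V)) : Prop where
  pairwiseDisjoint : F.PairwiseDisjoint id
  sUnion_eq : ⋃₀ F = A
  isPart : ∀ S ∈ F, IsSCPart G A S ∨ IsQuadPart G A F S

def SQCOn (G : SimpleGraph V) (A : Set V) : Prop := ∃ F, IsSQCPartition G A F

lemma nbhdOn_sdiff (x : V) : nbhdOn G (A \ R) x = nbhdOn G A x \ R := by
  ext u; simp only [nbhdOn, Set.mem_sdiff, Set.mem_ofPred_eq]; tauto

lemma closedNbhdOn_sdiff {x : V} (hx : x ∉ R) :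
    closedNbhdOn G (A \ R) x = closedNbhdOn G A x \ R := by
  rw [closedNbhdOn, closedNbhdOn, nbhdOn_sdiff, Set.insert_sdiff_of_notMem _ hx]

lemma SimplicialOn.mono {B : Set V} {x : V} (hs : SimplicialOn G A x) (h : B ⊆ A) :
    SimplicialOn G B x :=
  fun u hu w hw => hs u ⟨h hu.1, hu.2⟩ w ⟨h hw.1, hw.2⟩

lemma simplicialOn_of_subsingleton {x : V} (h : (nbhdOn G A x).Subsingleton) :
    SimplicialOn G A x :=
  fun _ hu _ hw hne => absurd (h hu hw) hne

lemma isSCPart_closedNbhdOn {x : V} (hx : x ∈ A) (h : (nbhdOn G A x).Subsingleton) :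
    IsSCPart G A (closedNbhdOn G A x) :=
  Or.inl ⟨x, hx, simplicialOn_of_subsingleton h, rfl⟩

lemma degOn_mono [Finite V] {B : Set V} (h : B ⊆ A) (x : V) : degOn G B x ≤ degOn G A x :=
  Set.ncard_le_ncard (fun _ hu => ⟨h hu.1, hu.2⟩)

lemma nbhdOn_eq_pair [Finite V] {z a b : V} (h2 : degOn G A z ≤ 2) (ha : a ∈ nbhdOn G A z)
    (hb : b ∈ nbhdOn G A z) (hab : a ≠ b) : nbhdOn G A z = {a, b} :=
  (Set.eq_of_subset_of_ncard_le (Set.insert_subset ha (Set.singleton_subset_iff.2 hb))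
    (by rw [Set.ncard_pair hab]; exact h2)).symm

lemma three_le_degOn [Finite V] {z a b c : V} (ha : a ∈ nbhdOn G A z) (hb : b ∈ nbhdOn G A z)
    (hc : c ∈ nbhdOn G A z) (hab : a ≠ b) (hac : a ≠ c) (hbc : b ≠ c) : 3 ≤ degOn G A z := by
  rw [degOn, ← Set.ncard_eq_three.2 ⟨a, b, c, hab, hac, hbc, rfl⟩]
  exact Set.ncard_le_ncard (Set.insert_subset ha (Set.insert_subset hb
    (Set.singleton_subset_iff.2 hc)))

end Relative

section Shedding

variable {G : SimpleGraph V} {A : Set V}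

def IsSheddingOn (G : SimpleGraph V) (A : Set V) (v : V) : Prop :=
  ∀ S, IsIndepOn G (A \ closedNbhd G v) S → ¬ IsMaxIndepOn G (A \ {v}) S

lemma isSheddingOn_of_exists {v : V}
    (h : ∀ S, IsIndepOn G (A \ closedNbhd G v) S → ∃ u ∈ A, G.Adj v u ∧ ∀ s ∈ S, ¬ G.Adj u s) :
    IsSheddingOn G A v := by
  rintro S hS ⟨-, hmax⟩
  obtain ⟨u, huA, hvu, hfree⟩ := h S hS
  have huS : u ∉ S := fun hu => (hS.1 hu).2 (Or.inr hvu)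
  refine huS ((hmax (insert u S) ⟨?_, ?_⟩ (Set.subset_insert u S)).symm ▸ Set.mem_insert u S)
  · refine Set.insert_subset ⟨huA, fun h => G.ne_of_adj hvu (h.symm)⟩ fun s hs => ?_
    exact ⟨(hS.1 hs).1, fun h => (hS.1 hs).2 (Or.inl h)⟩
  · rintro a (rfl | ha) b (rfl | hb)
    · exact G.irrefl
    · exact hfree b hb
    · exact fun h => hfree a ha h.symm
    · exact hS.2 a ha b hb

lemma isSheddingOn_of_nbhdOn_subset {v u : V} (hu : u ∈ A) (hvu : G.Adj v u)
    (hN : nbhdOn G A u ⊆ closedNbhd G v) : IsSheddingOn G A v :=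
  isSheddingOn_of_exists fun _ hS =>
    ⟨u, hu, hvu, fun _ hs hus => (hS.1 hs).2 (hN ⟨(hS.1 hs).1, hus⟩)⟩

lemma isSheddingOn_of_nbhdOn_subset_insert {v u₁ u₂ w₁ w₂ : V} (hu₁ : u₁ ∈ A) (hu₂ : u₂ ∈ A)
    (hvu₁ : G.Adj v u₁) (hvu₂ : G.Adj v u₂)
    (hN₁ : nbhdOn G A u₁ ⊆ insert w₁ (closedNbhd G v))
    (hN₂ : nbhdOn G A u₂ ⊆ insert w₂ (closedNbhd G v)) (hw : G.Adj w₁ w₂) :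
    IsSheddingOn G A v := by
  refine isSheddingOn_of_exists fun S hS => ?_
  have hmem : ∀ {u w}, nbhdOn G A u ⊆ insert w (closedNbhd G v) →
      ∀ s ∈ S, G.Adj u s → s = w := fun hN s hs hus =>
    (hN ⟨(hS.1 hs).1, hus⟩).resolve_right (hS.1 hs).2
  by_contra! hbad
  obtain ⟨s₁, hs₁, h₁⟩ := hbad u₁ hu₁ hvu₁
  obtain ⟨s₂, hs₂, h₂⟩ := hbad u₂ hu₂ hvu₂
  exact hS.2 s₁ hs₁ s₂ hs₂ (hmem hN₁ s₁ hs₁ h₁ ▸ hmem hN₂ s₂ hs₂ h₂ ▸ hw)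

theorem VDOn.of_shedding [Finite V] (P : Set V → Prop)
    (hP : ∀ A, P A → (∀ u ∈ A, ∀ w ∈ A, ¬ G.Adj u w) ∨
      ∃ v ∈ A, IsSheddingOn G A v ∧ P (A \ {v}) ∧ P (A \ closedNbhd G v))
    (A : Set V) (hA : P A) : VDOn G A := by
  induction hn : A.ncard using Nat.strong_induction_on generalizing A with
  | _ n ih =>
    obtain hA | ⟨v, hv, hshed, hdel, hlk⟩ := hP A hA
    · exact VDOn.no_edges A hA
    · refine VDOn.step A v hv (ih _ ?_ _ hdel rfl) (ih _ ?_ _ hlk rfl) hshed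
      · exact hn ▸ Set.ncard_sdiff_singleton_lt_of_mem hv
      · exact hn ▸ Set.ncard_lt_ncard (Set.sdiff_ssubset_left_iff.2 ⟨v, hv, Or.inl rfl⟩)

end Shedding

section Repair

variable {G : SimpleGraph V} {A R S : Set V}

structure IsSCRepair (G : SimpleGraph V) (A R S : Set V) (fam : Set (Set V)) : Prop where
  pairwiseDisjoint : fam.PairwiseDisjoint id
  sUnion_eq : ⋃₀ fam = S \ R
  isSCPart : ∀ T ∈ fam, IsSCPart G (A \ R) T

lemma IsSCRepair.empty (h : S ⊆ R) : IsSCRepair G A R S ∅ :=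
  ⟨Set.pairwiseDisjoint_empty, by rw [Set.sUnion_empty, Set.sdiff_eq_empty.2 h], by simp⟩

lemma IsSCRepair.singleton {T : Set V} (h : S \ R = T) (hT : IsSCPart G (A \ R) T) :
    IsSCRepair G A R S {T} :=
  ⟨Set.pairwiseDisjoint_singleton _ _, by rw [Set.sUnion_singleton, h], by simpa using hT⟩

lemma IsSCRepair.pair {T₁ T₂ : Set V} (h : S \ R = T₁ ∪ T₂) (hd : Disjoint T₁ T₂)
    (h₁ : IsSCPart G (A \ R) T₁) (h₂ : IsSCPart G (A \ R) T₂) : IsSCRepair G A R S {T₁, T₂} := by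
  refine ⟨Set.pairwiseDisjoint_insert.2 ⟨Set.pairwiseDisjoint_singleton _ _, ?_⟩,
    by rw [Set.sUnion_pair, h], by rintro T (rfl | rfl) <;> assumption⟩
  rintro _ rfl -
  exact hd

lemma isSCPart_sdiff_pair [Finite V] {z a b : V} (hN : nbhdOn G A z = {a, b}) (hz : z ∈ A)
    (hzR : z ∉ R) (ha : a ∉ R) (hb : b ∈ R) : IsSCPart G (A \ R) {z, a} := by
  have hN' : nbhdOn G (A \ R) z = {a} := by
    rw [nbhdOn_sdiff, hN, Set.insert_sdiff_of_notMem _ ha,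
      Set.sdiff_eq_empty.2 (Set.singleton_subset_iff.2 hb), insert_empty_eq]
  have h := isSCPart_closedNbhdOn (G := G) (show z ∈ A \ R from ⟨hz, hzR⟩)
    (hN' ▸ Set.subsingleton_singleton)
  rwa [closedNbhdOn, hN'] at h

lemma isSCPart_sdiff_singleton [Finite V] {z a b : V} (hN : nbhdOn G A z = {a, b}) (hz : z ∈ A)
    (hzR : z ∉ R) (ha : a ∈ R) (hb : b ∈ R) : IsSCPart G (A \ R) {z} := by
  have hN' : nbhdOn G (A \ R) z = ∅ := by
    rw [nbhdOn_sdiff, hN, Set.sdiff_eq_empty]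
    exact Set.insert_subset ha (Set.singleton_subset_iff.2 hb)
  have h := isSCPart_closedNbhdOn (G := G) (show z ∈ A \ R from ⟨hz, hzR⟩)
    (hN' ▸ Set.subsingleton_empty)
  rwa [closedNbhdOn, hN', insert_empty_eq] at h

lemma IsSCRepair.closedNbhdOn {x : V} (hx : x ∈ A) (hxs : SimplicialOn G A x) (hxR : x ∉ R) :
    IsSCRepair G A R (closedNbhdOn G A x) {closedNbhdOn G (A \ R) x} :=
  .singleton (closedNbhdOn_sdiff hxR).symm (Or.inl ⟨x, ⟨hx, hxR⟩, hxs.mono Set.sdiff_subset, rfl⟩)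

lemma IsSimplexPart.exists_scRepair {v : V} (hS : IsSimplexPart G A S) (hv : v ∈ A)
    (hvS : v ∉ S) (hR : R ⊆ closedNbhd G v) : ∃ fam, IsSCRepair G A R S fam := by
  obtain ⟨y, hy, hys, rfl⟩ := hS
  refine ⟨_, .closedNbhdOn hy hys fun h => ?_⟩
  rcases hR h with rfl | hvy
  exacts [hvS (Set.mem_insert _ _), hvS (Or.inr ⟨hv, hvy.symm⟩)]

end Repair

lemma ZMod.five_cases (j : ZMod 5) : j = 0 ∨ j = 1 ∨ j = 2 ∨ j = 3 ∨ j = 4 := by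
  decide +revert

lemma Set.range_zmod_five {α : Type*} (c : ZMod 5 → α) :
    Set.range c = {c 0, c 1, c 2, c 3, c 4} := by
  ext u
  simp only [Set.mem_range, Set.mem_insert_iff, Set.mem_singleton_iff]
  constructor
  · rintro ⟨j, rfl⟩
    rcases ZMod.five_cases j with rfl | rfl | rfl | rfl | rfl <;> simp
  · rintro (rfl | rfl | rfl | rfl | rfl) <;> exact ⟨_, rfl⟩

lemma ZMod.sub_one_ne_add_one (j : ZMod 5) : j - 1 ≠ j + 1 := by
  decide +revert

namespace IsBasic5CycleOn

variable {G : SimpleGraph V} {A R : Set V} {c : ZMod 5 → V}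

lemma adj (hc : IsBasic5CycleOn G A c) {i j : ZMod 5} (h : i + 1 = j) : G.Adj (c i) (c j) :=
  h ▸ hc.isCycleMap.2 i

lemma ne (hc : IsBasic5CycleOn G A c) {i j : ZMod 5} (h : i ≠ j) : c i ≠ c j :=
  hc.isCycleMap.1.ne h

lemma nbhdOn_eq [Finite V] (hc : IsBasic5CycleOn G A c) (j : ZMod 5)
    (hj : degOn G A (c j) ≤ 2) : nbhdOn G A (c j) = {c (j - 1), c (j + 1)} :=
  nbhdOn_eq_pair hj ⟨hc.mem _, (hc.adj (sub_add_cancel j 1)).symm⟩ ⟨hc.mem _, hc.adj rfl⟩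
    (hc.ne (ZMod.sub_one_ne_add_one j))

lemma rotate (hc : IsBasic5CycleOn G A c) (p : ZMod 5) :
    IsBasic5CycleOn G A (fun j => c (p + j)) where
  mem j := hc.mem _
  isCycleMap := ⟨hc.isCycleMap.1.comp (add_right_injective p), fun j => by
    simpa [add_assoc] using hc.isCycleMap.2 (p + j)⟩
  not_three_le_degOn j := by simpa [add_assoc] using hc.not_three_le_degOn (p + j)

lemma range_rotate (p : ZMod 5) : Set.range (fun j => c (p + j)) = Set.range c :=
  (add_left_surjective p).range_comp c

lemma mono [Finite V] {B : Set V} (hc : IsBasic5CycleOn G A c) (hB : B ⊆ A)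
    (hcB : ∀ i, c i ∈ B) : IsBasic5CycleOn G B c :=
  ⟨hcB, hc.isCycleMap, fun i h => hc.not_three_le_degOn i
    ⟨h.1.trans (degOn_mono hB _), h.2.trans (degOn_mono hB _)⟩⟩

lemma three_le_degOn_of_adj [Finite V] (hc : IsBasic5CycleOn G A c) {v : V} (hv : v ∈ A)
    (hvc : v ∉ Set.range c) {j : ZMod 5} (h : G.Adj v (c j)) : 3 ≤ degOn G A (c j) :=
  three_le_degOn ⟨hc.mem _, (hc.adj (sub_add_cancel j 1)).symm⟩ ⟨hc.mem _, hc.adj rfl⟩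
    ⟨hv, h.symm⟩ (hc.ne (ZMod.sub_one_ne_add_one j))
    (fun h => hvc ⟨_, h⟩) (fun h => hvc ⟨_, h⟩)

lemma disjoint_pair (hc : IsBasic5CycleOn G A c) {i j k l : ZMod 5} (hik : i ≠ k) (hil : i ≠ l)
    (hjk : j ≠ k) (hjl : j ≠ l) : Disjoint ({c i, c j} : Set V) {c k, c l} := by
  simp only [Set.disjoint_insert_left, Set.disjoint_singleton_left, Set.mem_insert_iff,
    Set.mem_singleton_iff, not_or]
  exact ⟨⟨hc.ne hik, hc.ne hil⟩, hc.ne hjk, hc.ne hjl⟩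

lemma exists_scRepair_of_forall_notMem [Finite V] (hc : IsBasic5CycleOn G A c)
    (hR : ∀ i, c i ∉ R) : ∃ fam, IsSCRepair G A R (Set.range c) fam :=
  ⟨_, .singleton (sdiff_eq_self_iff_disjoint.2 (Set.disjoint_right.2 fun _ ⟨i, hi⟩ => hi ▸ hR i))
    (Or.inr ⟨c, hc.mono Set.sdiff_subset fun i => ⟨hc.mem i, hR i⟩, rfl⟩)⟩

lemma exists_scRepair_of_mem_zero [Finite V] (hc : IsBasic5CycleOn G A c) (h0 : c 0 ∈ R)
    (h1 : c 1 ∉ R) (h2 : c 2 ∉ R) (h3 : c 3 ∉ R) (h4 : c 4 ∉ R)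
    (hd1 : degOn G A (c 1) ≤ 2) (hd4 : degOn G A (c 4) ≤ 2) :
    ∃ fam, IsSCRepair G A R (Set.range c) fam := by
  have hN1 : nbhdOn G A (c 1) = {c 2, c 0} := (hc.nbhdOn_eq 1 hd1).trans (Set.pair_comm _ _)
  have hN4 : nbhdOn G A (c 4) = {c 3, c 0} := hc.nbhdOn_eq 4 hd4
  refine ⟨_, .pair ?_ (hc.disjoint_pair (i := 1) (j := 2) (k := 4) (l := 3) (by decide)
    (by decide) (by decide) (by decide)) (isSCPart_sdiff_pair hN1 (hc.mem 1) h1 h2 h0)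
    (isSCPart_sdiff_pair hN4 (hc.mem 4) h4 h3 h0)⟩
  rw [Set.range_zmod_five]
  ext u
  simp only [Set.mem_sdiff, Set.mem_union, Set.mem_insert_iff, Set.mem_singleton_iff]
  aesop

lemma exists_scRepair_of_mem_zero_two [Finite V] (hc : IsBasic5CycleOn G A c) (h0 : c 0 ∈ R)
    (h1 : c 1 ∉ R) (h2 : c 2 ∈ R) (h3 : c 3 ∉ R) (h4 : c 4 ∉ R)
    (hd1 : degOn G A (c 1) ≤ 2) (hd3 : degOn G A (c 3) ≤ 2) :
    ∃ fam, IsSCRepair G A R (Set.range c) fam := by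
  have hN3 : nbhdOn G A (c 3) = {c 4, c 2} := (hc.nbhdOn_eq 3 hd3).trans (Set.pair_comm _ _)
  refine ⟨_, .pair ?_ ?_ (isSCPart_sdiff_singleton (hc.nbhdOn_eq 1 hd1) (hc.mem 1) h1 h0 h2)
    (isSCPart_sdiff_pair hN3 (hc.mem 3) h3 h4 h2)⟩
  · rw [Set.range_zmod_five]
    ext u
    simp only [Set.mem_sdiff, Set.mem_union, Set.mem_insert_iff, Set.mem_singleton_iff]
    aesop
  · simp only [Set.disjoint_singleton_left, Set.mem_insert_iff, Set.mem_singleton_iff, not_or]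
    exact ⟨hc.ne (by decide), hc.ne (by decide)⟩

lemma exists_scRepair_closedNbhd_zero [Finite V] (hc : IsBasic5CycleOn G A c)
    (hd3 : degOn G A (c 3) ≤ 2) :
    ∃ fam, IsSCRepair G A (closedNbhd G (c 0)) (Set.range c) fam := by
  have hN3 : nbhdOn G A (c 3) = {c 2, c 4} := hc.nbhdOn_eq 3 hd3
  have h1 : c 1 ∈ closedNbhd G (c 0) := Or.inr (hc.adj (by decide))
  have h4 : c 4 ∈ closedNbhd G (c 0) := Or.inr (hc.adj (by decide)).symm
  have h3 : c 3 ∉ closedNbhd G (c 0) := by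
    rintro (h | h)
    · exact hc.ne (by decide) h
    · have h30 : c 0 ∈ nbhdOn G A (c 3) := ⟨hc.mem 0, h.symm⟩
      rw [hN3] at h30
      rcases h30 with h30 | h30 <;> exact hc.ne (by decide) h30
  by_cases h2 : c 2 ∈ closedNbhd G (c 0)
  · refine ⟨_, .singleton ?_ (isSCPart_sdiff_singleton hN3 (hc.mem 3) h3 h2 h4)⟩
    rw [Set.range_zmod_five]
    ext u
    simp only [Set.mem_sdiff, Set.mem_insert_iff, Set.mem_singleton_iff]
    constructor
    · rintro ⟨rfl | rfl | rfl | rfl | rfl, hu⟩ <;> tauto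
    · rintro rfl
      exact ⟨by tauto, h3⟩
  · refine ⟨_, .singleton ?_ (isSCPart_sdiff_pair hN3 (hc.mem 3) h3 h2 h4)⟩
    rw [Set.range_zmod_five]
    ext u
    simp only [Set.mem_sdiff, Set.mem_insert_iff, Set.mem_singleton_iff]
    constructor
    · rintro ⟨rfl | rfl | rfl | rfl | rfl, hu⟩ <;> tauto
    · rintro (rfl | rfl) <;> tauto

end IsBasic5CycleOn

lemma ZMod.exists_false_of_not_consecutive :
    ∀ f : ZMod 5 → Bool, (∀ i, f i = true → f (i + 1) = false) →
      ∃ p, f (p + 1) = false ∧ f (p + 3) = false ∧ f (p + 4) = false := by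
  decide

/-- The subsets of `ZMod 5` without two cyclically consecutive elements are `∅`, `{p}` and
`{p, p + 2}`. -/
lemma ZMod.eq_false_or_exists_rotate_of_not_consecutive :
    ∀ f : ZMod 5 → Bool, (∀ i, f i = true → f (i + 1) = false) →
      (∀ j, f j = false) ∨ ∃ p, (∀ j, f (p + j) = true ↔ j = 0) ∨
        (∀ j, f (p + j) = true ↔ j = 0 ∨ j = 2) := by
  decide

namespace IsBasic5CycleOn

variable {G : SimpleGraph V} {A R : Set V} {c : ZMod 5 → V}

lemma exists_degOn_le_two (hc : IsBasic5CycleOn G A c) :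
    ∃ p, degOn G A (c (p + 1)) ≤ 2 ∧ degOn G A (c (p + 3)) ≤ 2 ∧ degOn G A (c (p + 4)) ≤ 2 := by
  obtain ⟨p, hp⟩ := ZMod.exists_false_of_not_consecutive (fun j => decide (3 ≤ degOn G A (c j)))
    fun i hi => by simpa using fun h => hc.not_three_le_degOn i ⟨by simpa using hi, h⟩
  simp only [decide_eq_false_iff_not, not_le] at hp
  exact ⟨p, by omega⟩

lemma degOn_le_two_of_three_le_prev (hc : IsBasic5CycleOn G A c) {i j : ZMod 5} (h : i + 1 = j)
    (hi : 3 ≤ degOn G A (c i)) : degOn G A (c j) ≤ 2 := by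
  have := hc.not_three_le_degOn i
  rw [h] at this
  omega

lemma degOn_le_two_of_three_le_next (hc : IsBasic5CycleOn G A c) {i j : ZMod 5} (h : i + 1 = j)
    (hj : 3 ≤ degOn G A (c j)) : degOn G A (c i) ≤ 2 := by
  have := hc.not_three_le_degOn i
  rw [h] at this
  omega

/-- If the deleted vertices of a basic 5-cycle all have degree at least 3, then no two of
them are adjacent and their neighbours on the cycle have degree at most 2. -/
lemma exists_scRepair_of_three_le_degOn [Finite V] (hc : IsBasic5CycleOn G A c)
    (hR : ∀ i, c i ∈ R → 3 ≤ degOn G A (c i)) : ∃ fam, IsSCRepair G A R (Set.range c) fam := by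
  classical
  rcases ZMod.eq_false_or_exists_rotate_of_not_consecutive (fun j => decide (c j ∈ R))
    (fun i hi => by
      simpa using fun h => hc.not_three_le_degOn i ⟨hR i (by simpa using hi), hR _ h⟩)
    with hnone | ⟨p, hp | hp⟩
  · exact hc.exists_scRepair_of_forall_notMem (by simpa using hnone)
  all_goals
    simp only [decide_eq_true_eq] at hp
    rw [← range_rotate p]
    have hc' := hc.rotate p
    have hR' : ∀ i, c (p + i) ∈ R → 3 ≤ degOn G A (c (p + i)) := fun i => hR _
  · have h0 : c (p + 0) ∈ R := (hp 0).2 rfl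
    exact hc'.exists_scRepair_of_mem_zero h0 ((hp 1).not.2 (by decide))
      ((hp 2).not.2 (by decide)) ((hp 3).not.2 (by decide)) ((hp 4).not.2 (by decide))
      (hc'.degOn_le_two_of_three_le_prev (by decide) (hR' 0 h0))
      (hc'.degOn_le_two_of_three_le_next (by decide) (hR' 0 h0))
  · have h0 : c (p + 0) ∈ R := (hp 0).2 (by decide)
    have h2 : c (p + 2) ∈ R := (hp 2).2 (by decide)
    exact hc'.exists_scRepair_of_mem_zero_two h0 ((hp 1).not.2 (by decide)) h2
      ((hp 3).not.2 (by decide)) ((hp 4).not.2 (by decide))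
      (hc'.degOn_le_two_of_three_le_prev (by decide) (hR' 0 h0))
      (hc'.degOn_le_two_of_three_le_prev (by decide) (hR' 2 h2))

end IsBasic5CycleOn

lemma ZMod.four_cases (j : ZMod 4) : j = 0 ∨ j = 1 ∨ j = 2 ∨ j = 3 := by
  decide +revert

/-- Guarantees that a lone survivor of `B(Q)` in `G[A \ R]` is an isolated vertex. -/
def BPairSafe (R : Set V) (q : ZMod 4 → V) : Prop :=
  (q 0 ∉ R ∨ q 1 ∉ R) ∧ (q 0 ∈ R ∨ q 1 ∈ R → q 2 ∈ R ∧ q 3 ∈ R)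

namespace IsBasic4CycleOn

variable {G : SimpleGraph V} {A R : Set V} {q : ZMod 4 → V}

lemma adj (hq : IsBasic4CycleOn G A q) {i j : ZMod 4} (h : i + 1 = j) : G.Adj (q i) (q j) :=
  h ▸ hq.isCycleMap.2 i

lemma ne (hq : IsBasic4CycleOn G A q) {i j : ZMod 4} (h : i ≠ j) : q i ≠ q j :=
  hq.isCycleMap.1.ne h

lemma nbhdOn_zero [Finite V] (hq : IsBasic4CycleOn G A q) : nbhdOn G A (q 0) = {q 1, q 3} :=
  nbhdOn_eq_pair hq.degOn_zero.le ⟨hq.mem 1, hq.adj rfl⟩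
    ⟨hq.mem 3, (hq.adj (by decide)).symm⟩ (hq.ne (by decide))

lemma nbhdOn_one [Finite V] (hq : IsBasic4CycleOn G A q) : nbhdOn G A (q 1) = {q 0, q 2} :=
  nbhdOn_eq_pair hq.degOn_one.le ⟨hq.mem 0, (hq.adj (i := 0) rfl).symm⟩
    ⟨hq.mem 2, hq.adj (by decide)⟩ (hq.ne (by decide))

lemma isSCPart_or_sdiff [Finite V] (hq : IsBasic4CycleOn G A q) (hR : BPairSafe R q) :
    IsSCPart G (A \ R) ({q 0, q 1} \ R) ∨ (IsBasic4CycleOn G (A \ R) q ∧ ∀ i, q i ∉ R) := by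
  obtain ⟨h01, h23⟩ := hR
  by_cases h0 : q 0 ∈ R
  · have h1 := h01.resolve_left (not_not.2 h0)
    obtain ⟨h2, -⟩ := h23 (Or.inl h0)
    left
    rw [Set.insert_sdiff_of_mem _ h0, sdiff_eq_self_iff_disjoint.2
      (Set.disjoint_singleton_right.2 h1)]
    exact isSCPart_sdiff_singleton hq.nbhdOn_one (hq.mem 1) h1 h0 h2
  by_cases h1 : q 1 ∈ R
  · obtain ⟨-, h3⟩ := h23 (Or.inr h1)
    left
    rw [Set.insert_sdiff_of_notMem _ h0, Set.sdiff_eq_empty.2 (Set.singleton_subset_iff.2 h1),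
      insert_empty_eq]
    exact isSCPart_sdiff_singleton hq.nbhdOn_zero (hq.mem 0) h0 h1 h3
  have h01' : ({q 0, q 1} : Set V) \ R = {q 0, q 1} := by simp [h0, h1]
  rw [h01']
  by_cases h3 : q 3 ∈ R
  · exact Or.inl (isSCPart_sdiff_pair hq.nbhdOn_zero (hq.mem 0) h0 h1 h3)
  by_cases h2 : q 2 ∈ R
  · exact Or.inl (Set.pair_comm (q 1) (q 0) ▸
      isSCPart_sdiff_pair hq.nbhdOn_one (hq.mem 1) h1 h0 h2)
  have hq' : ∀ i, q i ∉ R := by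
    intro i
    rcases ZMod.four_cases i with rfl | rfl | rfl | rfl <;> assumption
  refine Or.inr ⟨⟨fun i => ⟨hq.mem i, hq' i⟩, hq.isCycleMap, ?_, ?_⟩, hq'⟩
  · rw [degOn, nbhdOn_sdiff, hq.nbhdOn_zero, sdiff_eq_self_iff_disjoint.2 (by simp [h1, h3]),
      ← hq.nbhdOn_zero]
    exact hq.degOn_zero
  · rw [degOn, nbhdOn_sdiff, hq.nbhdOn_one, sdiff_eq_self_iff_disjoint.2 (by simp [h0, h2]),
      ← hq.nbhdOn_one]
    exact hq.degOn_one

lemma bPairSafe [Finite V] (hq : IsBasic4CycleOn G A q) {v : V} (hv : v ∈ A) (hv0 : q 0 ≠ v)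
    (hv1 : q 1 ≠ v) (hR : R = {v} ∨ R = closedNbhd G v) :
    BPairSafe R q := by
  rcases hR with rfl | rfl
  · exact ⟨Or.inl hv0, by rintro (h | h) <;> contradiction⟩
  have h0 : q 0 ∈ closedNbhd G v → v = q 3 := by
    rintro (h | h)
    · exact absurd h hv0
    · have h' : v ∈ nbhdOn G A (q 0) := ⟨hv, h.symm⟩
      rw [hq.nbhdOn_zero] at h'
      exact h'.resolve_left hv1.symm
  have h1 : q 1 ∈ closedNbhd G v → v = q 2 := by
    rintro (h | h)
    · exact absurd h hv1
    · have h' : v ∈ nbhdOn G A (q 1) := ⟨hv, h.symm⟩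
      rw [hq.nbhdOn_one] at h'
      exact h'.resolve_left hv0.symm
  refine ⟨?_, ?_⟩
  · by_contra! h
    exact hq.ne (i := 3) (j := 2) (by decide) ((h0 h.1).symm.trans (h1 h.2))
  · rintro (h | h)
    · obtain rfl := h0 h
      exact ⟨Or.inr (hq.adj (by decide)).symm, Or.inl rfl⟩
    · obtain rfl := h1 h
      exact ⟨Or.inl rfl, Or.inr (hq.adj (by decide))⟩

end IsBasic4CycleOn

namespace IsSQCPartition

variable {G : SimpleGraph V} {A R : Set V} {F : Set (Set V)}

lemma subset (hF : IsSQCPartition G A F) {S : Set V} (hS : S ∈ F) : S ⊆ A :=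
  hF.sUnion_eq ▸ Set.subset_sUnion_of_mem hS

lemma eq_of_mem (hF : IsSQCPartition G A F) {S T : Set V} (hS : S ∈ F) (hT : T ∈ F) {u : V}
    (huS : u ∈ S) (huT : u ∈ T) : S = T :=
  hF.pairwiseDisjoint.elim hS hT (Set.not_disjoint_iff.2 ⟨u, huS, huT⟩)

/-- A basic 4-cycle part that survives intact keeps pointing at the old parts containing
`q 2` and `q 3`; `sqcOn_sdiff` redirects it to their pieces. -/
lemma exists_refinement [Finite V] (hF : IsSQCPartition G A F)
    (hSC : ∀ S ∈ F, IsSCPart G A S → ∃ fam, IsSCRepair G A R S fam)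
    (hQ : ∀ q, IsBasic4CycleOn G A q → ({q 0, q 1} : Set V) ∈ F →
      ¬ IsSCPart G A {q 0, q 1} → BPairSafe R q) {S : Set V} (hS : S ∈ F) :
    ∃ fam : Set (Set V), fam.PairwiseDisjoint id ∧ ⋃₀ fam = S \ R ∧
      (IsSCPart G A S → ∀ T ∈ fam, IsSCPart G (A \ R) T) ∧
      ∀ T ∈ fam, IsSCPart G (A \ R) T ∨ ∃ q, IsBasic4CycleOn G (A \ R) q ∧ T = {q 0, q 1} ∧
        (∃ S₂ ∈ F, IsSCPart G A S₂ ∧ q 2 ∈ S₂) ∧ (∃ S₃ ∈ F, IsSCPart G A S₃ ∧ q 3 ∈ S₃) := by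
  by_cases hSC' : IsSCPart G A S
  · obtain ⟨fam, h₁, h₂, h₃⟩ := hSC S hS hSC'
    exact ⟨fam, h₁, h₂, fun _ => h₃, fun T hT => Or.inl (h₃ T hT)⟩
  obtain ⟨q, hq, rfl, hq₂, hq₃⟩ := (hF.isPart S hS).resolve_left hSC'
  refine ⟨{{q 0, q 1} \ R}, Set.pairwiseDisjoint_singleton _ _, Set.sUnion_singleton _,
    fun h => absurd h hSC', ?_⟩
  rintro T rfl
  refine (hq.isSCPart_or_sdiff (hQ q hq hS hSC')).imp id fun ⟨hq', hR⟩ => ⟨q, hq', ?_, hq₂, hq₃⟩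
  simp [hR 0, hR 1]

theorem sqcOn_sdiff [Finite V] (hF : IsSQCPartition G A F)
    (hSC : ∀ S ∈ F, IsSCPart G A S → ∃ fam, IsSCRepair G A R S fam)
    (hQ : ∀ q, IsBasic4CycleOn G A q → ({q 0, q 1} : Set V) ∈ F →
      ¬ IsSCPart G A {q 0, q 1} → BPairSafe R q) :
    SQCOn G (A \ R) := by
  choose! fam hdisj hunion hsc hpart using fun S (hS : S ∈ F) => hF.exists_refinement hSC hQ hS
  have hsub : ∀ S ∈ F, ∀ T ∈ fam S, T ⊆ S := fun S hS T hT =>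
    (Set.subset_sUnion_of_mem hT).trans ((hunion S hS).le.trans Set.sdiff_subset)
  have hcover : ∀ S ∈ F, ∀ u ∈ S, u ∉ R → ∃ T ∈ fam S, u ∈ T := fun S hS u hu huR =>
    Set.mem_sUnion.1 ((hunion S hS).symm ▸ (⟨hu, huR⟩ : u ∈ S \ R))
  refine ⟨{T | ∃ S ∈ F, T ∈ fam S}, ⟨?_, ?_, ?_⟩⟩
  · rintro T ⟨S, hS, hT⟩ T' ⟨S', hS', hT'⟩ hne
    by_cases hSS' : S = S'
    · subst hSS'
      exact hdisj S hS hT hT' hne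
    · exact (hF.pairwiseDisjoint hS hS' hSS').mono (hsub S hS T hT) (hsub S' hS' T' hT')
  · ext u
    simp only [Set.mem_sUnion, Set.mem_ofPred_eq, Set.mem_sdiff]
    constructor
    · rintro ⟨T, ⟨S, hS, hT⟩, hu⟩
      have hu' : u ∈ S \ R := hunion S hS ▸ Set.mem_sUnion_of_mem hu hT
      exact ⟨hF.subset hS hu'.1, hu'.2⟩
    · rintro ⟨hu, huR⟩
      obtain ⟨S, hS, huS⟩ := hF.sUnion_eq.symm ▸ hu
      obtain ⟨T, hT, huT⟩ := hcover S hS u huS huR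
      exact ⟨T, ⟨S, hS, hT⟩, huT⟩
  · have hlift : ∀ u ∈ A \ R, (∃ S ∈ F, IsSCPart G A S ∧ u ∈ S) →
        ∃ T ∈ {T | ∃ S ∈ F, T ∈ fam S}, IsSCPart G (A \ R) T ∧ u ∈ T := by
      rintro u ⟨-, huR⟩ ⟨S, hS, hSsc, huS⟩
      obtain ⟨T, hT, huT⟩ := hcover S hS u huS huR
      exact ⟨T, ⟨S, hS, hT⟩, hsc S hS hSsc T hT, huT⟩
    rintro T ⟨S, hS, hT⟩
    exact (hpart S hS T hT).imp id fun ⟨q, hq, hTq, hq₂, hq₃⟩ =>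
      ⟨q, hq, hTq, hlift _ (hq.mem 2) hq₂, hlift _ (hq.mem 3) hq₃⟩

theorem sqcOn_sdiff_of_mem [Finite V] (hF : IsSQCPartition G A F) {S₀ : Set V} (hS₀ : S₀ ∈ F)
    (hS₀sc : IsSCPart G A S₀) {v : V} (hv : v ∈ S₀) (hR : R = {v} ∨ R = closedNbhd G v)
    (hrep : ∃ fam, IsSCRepair G A R S₀ fam) : SQCOn G (A \ R) := by
  have hvA := hF.subset hS₀ hv
  have hRv : R ⊆ closedNbhd G v := by
    rcases hR with rfl | rfl
    exacts [Set.singleton_subset_iff.2 (Or.inl rfl), le_rfl]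
  refine hF.sqcOn_sdiff (fun S hS hSsc => ?_)
    fun q hq hQ hQsc => hq.bPairSafe hvA ?_ ?_ hR
  · by_cases h : S = S₀
    · exact h ▸ hrep
    have hvS : v ∉ S := fun hvS => h (hF.eq_of_mem hS hS₀ hvS hv)
    rcases hSsc with hsim | ⟨c, hc, rfl⟩
    · exact hsim.exists_scRepair hvA hvS hRv
    · exact hc.exists_scRepair_of_three_le_degOn fun i hi =>
        hc.three_le_degOn_of_adj hvA hvS ((hRv hi).resolve_left fun h => hvS ⟨i, h⟩)
  · rintro rfl
    exact hQsc (hF.eq_of_mem hS₀ hQ hv (Or.inl rfl) ▸ hS₀sc)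
  · rintro rfl
    exact hQsc (hF.eq_of_mem hS₀ hQ hv (Or.inr rfl) ▸ hS₀sc)

/-- Since `N[x] ⊆ N[v]`, the vertex `x` witnesses that `v` is shedding, and the simplex
vanishes from `G[A] ∖ N[v]`. -/
theorem shedding_of_simplexPart [Finite V] (hF : IsSQCPartition G A F) {x v : V} (hx : x ∈ A)
    (hxs : SimplicialOn G A x) (hS₀ : closedNbhdOn G A x ∈ F) (hv : v ∈ nbhdOn G A x) :
    IsSheddingOn G A v ∧ SQCOn G (A \ {v}) ∧ SQCOn G (A \ closedNbhd G v) := by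
  have hsub : closedNbhdOn G A x ⊆ closedNbhd G v := by
    rintro u (rfl | hu)
    · exact Or.inr hv.2.symm
    · by_cases huv : u = v
      · exact Or.inl huv
      · exact Or.inr (hxs v hv u hu (Ne.symm huv))
  have hS₀sc : IsSCPart G A (closedNbhdOn G A x) := Or.inl ⟨x, hx, hxs, rfl⟩
  have hvS₀ : v ∈ closedNbhdOn G A x := Or.inr hv
  exact ⟨isSheddingOn_of_nbhdOn_subset hx hv.2.symm fun u hu => hsub (Or.inr hu),
    hF.sqcOn_sdiff_of_mem hS₀ hS₀sc hvS₀ (Or.inl rfl)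
      ⟨_, .closedNbhdOn hx hxs (G.ne_of_adj hv.2)⟩,
    hF.sqcOn_sdiff_of_mem hS₀ hS₀sc hvS₀ (Or.inr rfl) ⟨∅, .empty hsub⟩⟩

/-- The only possible neighbours of `c 1` and `c 4` outside `N[c 0]` are `c 2` and `c 3`,
which no independent set contains both of. -/
theorem shedding_of_cyclePart [Finite V] (hF : IsSQCPartition G A F) {c : ZMod 5 → V}
    (hc : IsBasic5CycleOn G A c) (hS₀ : Set.range c ∈ F) (hd1 : degOn G A (c 1) ≤ 2)
    (hd3 : degOn G A (c 3) ≤ 2) (hd4 : degOn G A (c 4) ≤ 2) :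
    IsSheddingOn G A (c 0) ∧ SQCOn G (A \ {c 0}) ∧ SQCOn G (A \ closedNbhd G (c 0)) := by
  have hS₀sc : IsSCPart G A (Set.range c) := Or.inr ⟨c, hc, rfl⟩
  refine ⟨isSheddingOn_of_nbhdOn_subset_insert (hc.mem 1) (hc.mem 4) (hc.adj (i := 0) rfl)
      (hc.adj (i := 4) (j := 0) (by decide)).symm ?_ ?_ (hc.adj (i := 2) (j := 3) (by decide)),
    hF.sqcOn_sdiff_of_mem hS₀ hS₀sc ⟨0, rfl⟩ (Or.inl rfl)
      (hc.exists_scRepair_of_mem_zero rfl (hc.ne (by decide)) (hc.ne (by decide))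
        (hc.ne (by decide)) (hc.ne (by decide)) hd1 hd4),
    hF.sqcOn_sdiff_of_mem hS₀ hS₀sc ⟨0, rfl⟩ (Or.inr rfl) (hc.exists_scRepair_closedNbhd_zero hd3)⟩
  · rw [show nbhdOn G A (c 1) = {c 0, c 2} from hc.nbhdOn_eq 1 hd1]
    rintro u (rfl | rfl)
    exacts [Or.inr (Or.inl rfl), Or.inl rfl]
  · rw [show nbhdOn G A (c 4) = {c 3, c 0} from hc.nbhdOn_eq 4 hd4]
    rintro u (rfl | rfl)
    exacts [Or.inl rfl, Or.inr (Or.inl rfl)]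

theorem not_adj (hF : IsSQCPartition G A F)
    (hsimp : ∀ x ∈ A, closedNbhdOn G A x ∈ F → SimplicialOn G A x → nbhdOn G A x = ∅)
    (hcyc : ∀ c, IsBasic5CycleOn G A c → Set.range c ∉ F) : ∀ u ∈ A, ∀ w ∈ A, ¬ G.Adj u w := by
  have hiso : ∀ S ∈ F, IsSCPart G A S → ∀ u ∈ S, nbhdOn G A u = ∅ := by
    rintro S hS (⟨x, hx, hxs, rfl⟩ | ⟨c, hc, rfl⟩) u hu
    · have hx0 := hsimp x hx hS hxs
      rw [closedNbhdOn, hx0, insert_empty_eq, Set.mem_singleton_iff] at hu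
      exact hu ▸ hx0
    · exact absurd hS (hcyc c hc)
  intro u hu w hw huw
  obtain ⟨S, hS, huS⟩ := Set.mem_sUnion.1 (hF.sUnion_eq.symm ▸ hu)
  rcases hF.isPart S hS with hSsc | ⟨q, hq, rfl, ⟨S₂, hS₂, hS₂sc, hq₂⟩, -⟩
  · exact Set.notMem_empty w (hiso S hS hSsc u huS ▸ ⟨hw, huw⟩)
  · have hq₁ : q 1 ∈ nbhdOn G A (q 2) := ⟨hq.mem 1, (hq.adj (by decide)).symm⟩
    exact Set.notMem_empty _ (hiso S₂ hS₂ hS₂sc _ hq₂ ▸ hq₁)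

theorem not_adj_or_exists_isSheddingOn [Finite V] (hF : IsSQCPartition G A F) :
    (∀ u ∈ A, ∀ w ∈ A, ¬ G.Adj u w) ∨
      ∃ v ∈ A, IsSheddingOn G A v ∧ SQCOn G (A \ {v}) ∧ SQCOn G (A \ closedNbhd G v) := by
  by_cases hsimp : ∃ x ∈ A, closedNbhdOn G A x ∈ F ∧ SimplicialOn G A x ∧ (nbhdOn G A x).Nonempty
  · obtain ⟨x, hx, hS₀, hxs, v, hv⟩ := hsimp
    exact Or.inr ⟨v, hv.1, hF.shedding_of_simplexPart hx hxs hS₀ hv⟩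
  by_cases hcyc : ∃ c, IsBasic5CycleOn G A c ∧ Set.range c ∈ F
  · obtain ⟨c, hc, hS₀⟩ := hcyc
    obtain ⟨p, hd1, hd3, hd4⟩ := hc.exists_degOn_le_two
    exact Or.inr ⟨_, hc.mem _, hF.shedding_of_cyclePart (c := fun j => c (p + j)) (hc.rotate p)
      (by rwa [IsBasic5CycleOn.range_rotate]) hd1 hd3 hd4⟩
  refine Or.inl (hF.not_adj (fun x hx hS₀ hxs => ?_) fun c hc hS₀ => hcyc ⟨c, hc, hS₀⟩)
  exact Set.not_nonempty_iff_eq_empty.1 fun hne => hsimp ⟨x, hx, hS₀, hxs, hne⟩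

end IsSQCPartition

theorem SQCOn.vdOn [Finite V] {G : SimpleGraph V} {A : Set V} (h : SQCOn G A) : VDOn G A :=
  VDOn.of_shedding (SQCOn G) (fun _ ⟨_, hF⟩ => hF.not_adj_or_exists_isSheddingOn) A h

section Bridge

variable {G : SimpleGraph V}

lemma nbhdOn_univ (x : V) : nbhdOn G Set.univ x = nbhd G x := by
  ext; simp [nbhdOn, nbhd]

lemma degOn_univ (x : V) : degOn G Set.univ x = deg G x := by
  rw [degOn, deg, nbhdOn_univ]

lemma closedNbhdOn_univ (x : V) : closedNbhdOn G Set.univ x = closedNbhd G x := by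
  rw [closedNbhdOn, nbhdOn_univ]; rfl

lemma IsSimplicial.simplicialOn_univ {x : V} (h : IsSimplicial G x) :
    SimplicialOn G Set.univ x :=
  fun u hu w hw => h u w hu.2 hw.2

lemma IsBasic5Cycle.isBasic5CycleOn_univ {c : ZMod 5 → V} (h : IsBasic5Cycle G c) :
    IsBasic5CycleOn G Set.univ c :=
  ⟨fun _ => trivial, h.1, by simpa only [degOn_univ] using h.2⟩

lemma IsBasic4Cycle.isBasic4CycleOn_univ {q : ZMod 4 → V} (h : IsBasic4Cycle G q) :
    IsBasic4CycleOn G Set.univ q :=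
  ⟨fun _ => trivial, h.1, (degOn_univ _).trans h.2.1, (degOn_univ _).trans h.2.2.1⟩

lemma nbhd_eq_pair {z a b : V} (h2 : deg G z = 2) (ha : G.Adj z a) (hb : G.Adj z b)
    (hab : a ≠ b) : nbhd G z = {a, b} :=
  (Set.eq_of_subset_of_ncard_le (Set.insert_subset ha (Set.singleton_subset_iff.2 hb))
    (by rw [Set.ncard_pair hab]; exact h2.le)
    (Set.finite_of_ncard_ne_zero (h2.trans_ne two_ne_zero))).symm

lemma IsCycleMap.range_subset {n : ℕ} [NeZero n] {c : ZMod n → V} (hc : IsCycleMap G c)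
    {S : Set V} (hS : ∀ u ∈ S, ∀ w, G.Adj u w → w ∈ S) {j : ZMod n} (hj : c j ∈ S) :
    Set.range c ⊆ S := by
  have key : ∀ m : ℕ, c (j + m) ∈ S := by
    intro m
    induction m with
    | zero => simpa using hj
    | succ m ih => simpa [add_assoc] using hS _ ih _ (hc.2 (j + m))
  rintro _ ⟨i, rfl⟩
  simpa using key (i - j).val

/-- A 4-cycle all of whose vertices have degree 2 is a connected component; none of its
vertices lies in a simplex or on a 5-cycle. -/
lemma IsCycleMap.not_inSimplex_of_deg_eq_two {q : ZMod 4 → V} (hq : IsCycleMap G q)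
    (hdeg : ∀ i, deg G (q i) = 2) {u : V} (hu : u ∈ Set.range q) :
    ¬ InSimplex G u ∧ ¬ OnBasic5Cycle G u := by
  have hz : ∀ k : ZMod 4, k - 1 ≠ k + 1 ∧ k + 1 ≠ k - 1 - 1 ∧ k + 1 ≠ k - 1 + 1 := by decide
  have hprev : ∀ i, G.Adj (q i) (q (i - 1)) := fun i => by simpa using (hq.2 (i - 1)).symm
  have hN : ∀ i, nbhd G (q i) = {q (i - 1), q (i + 1)} := fun i =>
    nbhd_eq_pair (hdeg i) (hprev i) (hq.2 i) (hq.1.ne (hz i).1)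
  have hclosed : ∀ u ∈ Set.range q, ∀ w, G.Adj u w → w ∈ Set.range q := by
    rintro _ ⟨i, rfl⟩ w h
    rcases (hN i ▸ h : w ∈ ({q (i - 1), q (i + 1)} : Set V)) with rfl | rfl <;> exact ⟨_, rfl⟩
  refine ⟨fun ⟨y, hy, hyu⟩ => ?_, fun ⟨c, hc, hu'⟩ => ?_⟩
  · obtain ⟨i, rfl⟩ : y ∈ Set.range q := by
      rcases hyu with rfl | h
      exacts [hu, hclosed _ hu _ h.symm]
    have h : q (i + 1) ∈ nbhd G (q (i - 1)) :=
      hy _ _ (hprev i) (hq.2 i) (hq.1.ne (hz i).1)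
    rw [hN] at h
    rcases h with h | h
    exacts [(hz i).2.1 (hq.1 h), (hz i).2.2 (hq.1 h)]
  · obtain ⟨j, rfl⟩ := hu'
    choose g hg using fun i => hc.1.range_subset hclosed hu ⟨i, rfl⟩
    have hinj : Function.Injective g := fun a b hab => hc.1.1 (by rw [← hg a, ← hg b, hab])
    simpa [ZMod.card] using Fintype.card_le_of_injective g hinj

lemma IsBasic4Cycle.reverse {q : ZMod 4 → V} (hq : IsBasic4Cycle G q) :
    IsBasic4Cycle G (fun i => q (1 - i)) := by
  obtain ⟨⟨hinj, hadj⟩, hd0, hd1, h2, h3⟩ := hq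
  refine ⟨⟨hinj.comp (sub_right_injective), fun i => ?_⟩, hd1, hd0, h3, h2⟩
  have h := (hadj (1 - (i + 1))).symm
  rwa [show 1 - (i + 1) + 1 = 1 - i by ring] at h

/-- If `B(Q)` and `B(Q')` are disjoint then `q 2 ≠ q' 0`: otherwise all four vertices of `Q`
have degree 2, and `q' 2`, a vertex of `Q`, could lie neither in a simplex nor on a
basic 5-cycle. -/
lemma IsBasic4Cycle.two_ne_zero_of_disjoint {q q' : ZMod 4 → V} (hq : IsBasic4Cycle G q)
    (hq' : IsBasic4Cycle G q') (hB : Disjoint ({q 0, q 1} : Set V) {q' 0, q' 1}) :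
    q 2 ≠ q' 0 := by
  obtain ⟨⟨hinj, hadj⟩, hd0, hd1, -, -⟩ := hq
  obtain ⟨⟨-, hadj'⟩, hd0', hd1', h2', -⟩ := hq'
  intro h
  have hd2 : deg G (q 2) = 2 := h ▸ hd0'
  have h1' : q' 1 ∈ nbhd G (q 2) := h ▸ hadj' 0
  rw [nbhd_eq_pair hd2 (hadj 1).symm (hadj 2) (hinj.ne (by decide))] at h1'
  rcases h1' with h1' | h1'
  · exact Set.disjoint_left.1 hB (Or.inr rfl) (Or.inr h1'.symm)
  have hd3 : deg G (q 3) = 2 := h1' ▸ hd1'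
  have hdeg : ∀ i, deg G (q i) = 2 := fun i => by
    rcases ZMod.four_cases i with rfl | rfl | rfl | rfl <;> assumption
  have h2q : q' 2 ∈ nbhd G (q 3) := h1' ▸ hadj' 1
  rw [nbhd_eq_pair hd3 (hadj 2).symm (hadj 3) (hinj.ne (by decide))] at h2q
  have hmem : q' 2 ∈ Set.range q := by rcases h2q with h | h <;> exact ⟨_, h.symm⟩
  obtain ⟨hns, hnc⟩ := IsCycleMap.not_inSimplex_of_deg_eq_two ⟨hinj, hadj⟩ hdeg hmem
  exact h2'.elim hns hnc

lemma IsBasic4Cycle.two_three_notMem {ι : Type*} {q : ι → ZMod 4 → V}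
    (hq : ∀ k, IsBasic4Cycle G (q k))
    (hB : Pairwise fun k k' => Disjoint ({q k 0, q k 1} : Set V) {q k' 0, q k' 1}) (k k' : ι) :
    q k 2 ∉ ({q k' 0, q k' 1} : Set V) ∧ q k 3 ∉ ({q k' 0, q k' 1} : Set V) := by
  obtain rfl | hkk' := eq_or_ne k k'
  · refine ⟨?_, ?_⟩ <;> rintro (h | h) <;> exact (hq k).1.1.ne (by decide) h
  have hB₀ : Disjoint ({q k 0, q k 1} : Set V) {q k' 0, q k' 1} := hB hkk'
  have hB₁ := Set.pair_comm (q k' 0) (q k' 1) ▸ hB₀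
  have hB₂ := Set.pair_comm (q k 0) (q k 1) ▸ hB₀
  have hB₃ := Set.pair_comm (q k' 0) (q k' 1) ▸ hB₂
  refine ⟨?_, ?_⟩ <;> rintro (h | h)
  exacts [(hq k).two_ne_zero_of_disjoint (hq k') hB₀ h,
    (hq k).two_ne_zero_of_disjoint (hq k').reverse hB₁ h,
    (hq k).reverse.two_ne_zero_of_disjoint (hq k') hB₂ h,
    (hq k).reverse.two_ne_zero_of_disjoint (hq k').reverse hB₃ h]

theorem InSQC.sqcOn_univ (h : InSQC G) : SQCOn G Set.univ := by
  obtain ⟨m, s, t, x, c, q, hx, hc, hq, hpart⟩ := h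
  let P : Fin m ⊕ Fin s ⊕ Fin t → Set V := Sum.elim (fun i => closedNbhd G (x i))
    (Sum.elim (fun j => Set.range (c j)) fun k => {q k 0, q k 1})
  have hP : ∀ v, ∃! p, v ∈ P p := by
    intro v
    convert hpart v using 2 with p
    rcases p with i | j | k <;> rfl
  have hPinj : ∀ {p p' v}, v ∈ P p → v ∈ P p' → p = p' := fun h h' => (hP _).unique h h'
  have hnotB := IsBasic4Cycle.two_three_notMem hq fun k k' hkk' =>
    Set.disjoint_left.2 fun v hv hv' =>
      hkk' (by simpa using hPinj (p := .inr (.inr k)) (p' := .inr (.inr k')) hv hv')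
  have hsc : ∀ p, (∀ k, p ≠ .inr (.inr k)) → IsSCPart G Set.univ (P p) := by
    rintro (i | j | k) hp
    · exact Or.inl ⟨x i, trivial, (hx i).simplicialOn_univ, (closedNbhdOn_univ _).symm⟩
    · exact Or.inr ⟨c j, (hc j).isBasic5CycleOn_univ, rfl⟩
    · exact absurd rfl (hp k)
  have hpartOf : ∀ u, (∀ k, u ∉ P (.inr (.inr k))) →
      ∃ S ∈ Set.range P, IsSCPart G Set.univ S ∧ u ∈ S := fun u hu => by
    obtain ⟨p, hp, -⟩ := hP u
    exact ⟨P p, ⟨p, rfl⟩, hsc p fun k h => hu k (h ▸ hp), hp⟩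
  refine ⟨Set.range P, ⟨?_, ?_, ?_⟩⟩
  · rintro _ ⟨p, rfl⟩ _ ⟨p', rfl⟩ hne
    exact Set.disjoint_left.2 fun v hv hv' => hne (congrArg P (hPinj hv hv'))
  · exact Set.eq_univ_of_forall fun v => (hP v).exists.elim fun p hp => ⟨P p, ⟨p, rfl⟩, hp⟩
  · rintro _ ⟨i | j | k, rfl⟩
    · exact Or.inl (hsc (.inl i) fun _ => Sum.inl_ne_inr)
    · exact Or.inl (hsc (.inr (.inl j)) fun _ h => Sum.inl_ne_inr (Sum.inr.inj h))
    · exact Or.inr ⟨q k, (hq k).isBasic4CycleOn_univ, rfl, hpartOf _ fun k' => (hnotB k k').1,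
        hpartOf _ fun k' => (hnotB k k').2⟩

end Bridge

/-- Every finite simple graph belonging to the class `SQC` is
vertex decomposable. -/
theorem stmt0 {V : Type*} [Fintype V] (G : SimpleGraph V) (h : InSQC G) :
    VertexDecomposable G :=
  h.sqcOn_univ.vdOn
end

section
/- If a finite simple graph G belongs to the class SQC, with a partition of V(G) into the closed neighborhoods of m simplicial vertices, the vertex sets of s basic 5-cycles, and the sets B(Q) of t basic 4-cycles, then G is well-covered and its independence number satisfies α(G) = m + 2s + t. -/
open SimpleGraph

variable {V : Type*} {W : Type*}

/-!
Every maximal independent set `S` meets each piece of the partition in a number of vertices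
fixed by the piece alone: exactly one vertex of a simplex (a clique, dominated by its simplicial
vertex), exactly one of `B(Q)` (an edge whose two degree-2 ends could otherwise only be dominated
by the two adjacent remaining vertices of `Q`), and exactly two of a basic 5-cycle (at most two
by independence; at least two because its degree-2 vertices, one in each pair of consecutive
vertices, can only be dominated along the cycle). Summing over the pieces, every maximal
independent set has `m + 2s + t` vertices.
-/

section MaxIndep

variable {G : SimpleGraph V} {S : Set V}

lemma IsMaxIndepOn.exists_adj_of_notMem {A : Set V} (hS : IsMaxIndepOn G A S) {v : V}
    (hvA : v ∈ A) (hvS : v ∉ S) : ∃ u ∈ S, G.Adj v u := by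
  by_contra! h
  have hins : IsIndepOn G A (insert v S) := by
    refine ⟨Set.insert_subset hvA hS.1.1, ?_⟩
    rintro a (rfl | ha) b (rfl | hb) hab
    · exact G.irrefl hab
    · exact h b hb hab
    · exact h a ha hab.symm
    · exact hS.1.2 a ha b hb hab
  exact hvS ((hS.2 _ hins (Set.subset_insert v S)).symm ▸ Set.mem_insert v S)

lemma IsIndep.ncard_inter_le_one (hS : IsIndep G S) {K : Set V} (hK : IsCompleteOn G K) :
    (S ∩ K).ncard ≤ 1 := by
  rcases (S ∩ K).finite_or_infinite with hfin | hinf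
  · rw [Set.ncard_le_one_iff hfin]
    intro a b ha hb
    by_contra hab
    exact hS a ha.1 b hb.1 (hK a ha.2 b hb.2 hab)
  · simp [hinf.ncard]

lemma IsSimplicial.isCompleteOn_closedNbhd {v : V} (hv : IsSimplicial G v) :
    IsCompleteOn G (closedNbhd G v) := by
  rintro a (rfl | ha) b (rfl | hb) hab
  · exact absurd rfl hab
  · exact hb
  · exact ha.symm
  · exact hv a b ha hb hab

lemma isCompleteOn_pair {a b : V} (hab : G.Adj a b) : IsCompleteOn G {a, b} := by
  rintro u (rfl | rfl) w (rfl | rfl) huw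
  · exact absurd rfl huw
  · exact hab
  · exact hab.symm
  · exact absurd rfl huw

lemma IsMaxIndepOn.ncard_inter_closedNbhd [Finite V] (hS : IsMaxIndepOn G Set.univ S) {v : V}
    (hv : IsSimplicial G v) : (S ∩ closedNbhd G v).ncard = 1 := by
  refine le_antisymm (hS.1.2.ncard_inter_le_one hv.isCompleteOn_closedNbhd) ((Set.ncard_pos).2 ?_)
  by_cases hvS : v ∈ S
  · exact ⟨v, hvS, Set.mem_insert v _⟩
  · obtain ⟨u, huS, hvu⟩ := hS.exists_adj_of_notMem (Set.mem_univ v) hvS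
    exact ⟨u, huS, Set.mem_insert_of_mem v hvu⟩

end MaxIndep

section Cycles

variable {G : SimpleGraph V} {n : ℕ} {c : ZMod n → V}

lemma IsCycleMap.adj_pred (hc : IsCycleMap G c) (i : ZMod n) : G.Adj (c i) (c (i - 1)) := by
  simpa using (hc.2 (i - 1)).symm

lemma IsCycleMap.pair_subset_nbhd (hc : IsCycleMap G c) (i : ZMod n) :
    {c (i - 1), c (i + 1)} ⊆ nbhd G (c i) := by
  rintro u (rfl | rfl)
  · exact hc.adj_pred i
  · exact hc.2 i

lemma IsCycleMap.ncard_pair (hc : IsCycleMap G c) {i : ZMod n} (hi : i - 1 ≠ i + 1) :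
    ({c (i - 1), c (i + 1)} : Set V).ncard = 2 :=
  Set.ncard_pair (hc.1.ne hi)

lemma IsCycleMap.two_le_deg [Finite V] (hc : IsCycleMap G c) {i : ZMod n} (hi : i - 1 ≠ i + 1) :
    2 ≤ deg G (c i) :=
  hc.ncard_pair hi ▸ Set.ncard_le_ncard (hc.pair_subset_nbhd i)

lemma IsCycleMap.nbhd_eq_of_deg_eq_two (hc : IsCycleMap G c) {i : ZMod n} (hi : i - 1 ≠ i + 1)
    (hdeg : deg G (c i) = 2) : nbhd G (c i) = {c (i - 1), c (i + 1)} :=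
  (Set.eq_of_subset_of_ncard_le (hc.pair_subset_nbhd i) (by rw [hc.ncard_pair hi]; exact hdeg.le)
    (Set.finite_of_ncard_ne_zero (by unfold deg at hdeg; omega))).symm

lemma IsMaxIndepOn.pred_mem_or_succ_mem {S : Set V} (hS : IsMaxIndepOn G Set.univ S)
    (hc : IsCycleMap G c) {i : ZMod n} (hi : i - 1 ≠ i + 1) (hdeg : deg G (c i) = 2)
    (hiS : c i ∉ S) : c (i - 1) ∈ S ∨ c (i + 1) ∈ S := by
  obtain ⟨u, huS, hu⟩ := hS.exists_adj_of_notMem (Set.mem_univ _) hiS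
  have hu' : u ∈ nbhd G (c i) := hu
  rw [hc.nbhd_eq_of_deg_eq_two hi hdeg] at hu'
  rcases hu' with rfl | rfl
  · exact Or.inl huS
  · exact Or.inr huS

end Cycles

lemma zmod_five_card_eq_two_of_indep_of_dominating (F D : Finset (ZMod 5))
    (hF : ∀ i ∈ F, i + 1 ∉ F) (hD : ∀ i, i ∈ D ∨ i + 1 ∈ D)
    (hdom : ∀ i ∈ D, i ∉ F → i - 1 ∈ F ∨ i + 1 ∈ F) : F.card = 2 := by
  revert F D
  decide

section CycleCounts

variable {G : SimpleGraph V} {S : Set V}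

lemma IsMaxIndepOn.ncard_inter_cycle4 (hS : IsMaxIndepOn G Set.univ S) {c : ZMod 4 → V}
    (hc : IsCycleMap G c) (h0 : deg G (c 0) = 2) (h1 : deg G (c 1) = 2) :
    (S ∩ {c 0, c 1}).ncard = 1 := by
  refine le_antisymm (hS.1.2.ncard_inter_le_one (isCompleteOn_pair (hc.2 0)))
    ((Set.ncard_pos (Set.toFinite _)).2 ?_)
  by_contra hempty
  have h0S : c 0 ∉ S := fun h => hempty ⟨c 0, h, Set.mem_insert _ _⟩
  have h1S : c 1 ∉ S := fun h => hempty ⟨c 1, h, Set.mem_insert_of_mem _ rfl⟩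
  have h3S : c 3 ∈ S := (hS.pred_mem_or_succ_mem hc (by decide) h0 h0S).resolve_right h1S
  have h2S : c 2 ∈ S := (hS.pred_mem_or_succ_mem hc (by decide) h1 h1S).resolve_left h0S
  exact hS.1.2 _ h2S _ h3S (hc.2 2)

lemma IsMaxIndepOn.ncard_inter_range_basic5 [Finite V] (hS : IsMaxIndepOn G Set.univ S)
    {c : ZMod 5 → V} (hc : IsBasic5Cycle G c) :
    (S ∩ Set.range c).ncard = 2 := by
  classical
  obtain ⟨hcyc, hbasic⟩ := hc
  have hne : ∀ i : ZMod 5, i - 1 ≠ i + 1 := by decide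
  have hdeg : ∀ i, deg G (c i) = 2 ∨ deg G (c (i + 1)) = 2 := by
    intro i
    have := hcyc.two_le_deg (hne i)
    have := hcyc.two_le_deg (hne (i + 1))
    have := hbasic i
    omega
  rw [← Set.image_preimage_eq_inter_range, Set.ncard_image_of_injective _ hcyc.1,
    Set.ncard_eq_toFinset_card']
  refine zmod_five_card_eq_two_of_indep_of_dominating _
    (Finset.univ.filter fun i => deg G (c i) = 2) ?_ (by simpa using hdeg) ?_
  · simp only [Set.mem_toFinset, Set.mem_preimage]
    exact fun i hi hi1 => hS.1.2 _ hi _ hi1 (hcyc.2 i)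
  · simp only [Finset.mem_filter, Finset.mem_univ, true_and, Set.mem_toFinset, Set.mem_preimage]
    exact fun i hi hiS => hS.pred_mem_or_succ_mem hcyc (hne i) hi hiS

end CycleCounts

lemma ncard_eq_sum_ncard_inter_of_existsUnique_mem [Finite V] {ι : Type*} [Fintype ι]
    {P : ι → Set V} (hP : ∀ v, ∃! i, v ∈ P i) (S : Set V) :
    S.ncard = ∑ i, (S ∩ P i).ncard := by
  classical
  choose φ hφ hφu using hP
  have := Fintype.ofFinite V
  rw [Set.ncard_eq_toFinset_card' S, Finset.card_eq_sum_card_fiberwise (f := φ)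
    (t := Finset.univ) fun _ _ => Finset.mem_univ _]
  refine Finset.sum_congr rfl fun i _ => ?_
  rw [Set.ncard_eq_toFinset_card']
  congr 1
  ext v
  simp only [Finset.mem_filter, Set.mem_toFinset, Set.mem_inter_iff]
  exact and_congr_right fun _ => ⟨fun h => h ▸ hφ v, fun h => (hφu v i h).symm⟩

lemma exists_isMaxIndepOn_ncard_eq_indepNum [Finite V] (G : SimpleGraph V) :
    ∃ S, IsMaxIndepOn G Set.univ S ∧ S.ncard = _root_.indepNum G := by
  have hbdd : BddAbove {n : ℕ | ∃ S : Set V, IsIndep G S ∧ S.ncard = n} :=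
    ⟨Nat.card V, by rintro n ⟨S, -, rfl⟩; exact Set.ncard_le_card S⟩
  have hne : {n : ℕ | ∃ S : Set V, IsIndep G S ∧ S.ncard = n}.Nonempty :=
    ⟨0, ∅, fun u hu => absurd hu (Set.notMem_empty u), Set.ncard_empty V⟩
  obtain ⟨S, hSind, hScard⟩ := Nat.sSup_mem hne hbdd
  refine ⟨S, ⟨⟨Set.subset_univ S, hSind⟩, fun T hT hST => ?_⟩, hScard⟩
  exact Set.eq_of_subset_of_ncard_le hST (hScard ▸ le_csSup hbdd ⟨T, hT.2, rfl⟩)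

def sqcPiece (G : SimpleGraph V) {m s t : ℕ} (x : Fin m → V) (c : Fin s → ZMod 5 → V)
    (q : Fin t → ZMod 4 → V) : Fin m ⊕ Fin s ⊕ Fin t → Set V
  | .inl i => closedNbhd G (x i)
  | .inr (.inl j) => Set.range (c j)
  | .inr (.inr k) => {q k 0, q k 1}

/-- If `G` is in the class `SQC`, with a partition of `V(G)` into
the closed neighborhoods of `m` simplicial vertices, the vertex sets of `s`
basic 5-cycles and the sets `B(Q)` of `t` basic 4-cycles, then `G` is
well-covered and `α(G) = m + 2s + t`. -/
theorem stmt2 {V : Type*} [Fintype V] (G : SimpleGraph V)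
    (m s t : ℕ) (x : Fin m → V) (c : Fin s → ZMod 5 → V) (q : Fin t → ZMod 4 → V)
    (hx : ∀ i, IsSimplicial G (x i))
    (hc : ∀ j, IsBasic5Cycle G (c j))
    (hq : ∀ k, IsBasic4Cycle G (q k))
    (hpart : ∀ v : V, ∃! p : Fin m ⊕ Fin s ⊕ Fin t,
      match p with
      | Sum.inl i => v ∈ closedNbhd G (x i)
      | Sum.inr (Sum.inl j) => v ∈ Set.range (c j)
      | Sum.inr (Sum.inr k) => v = q k 0 ∨ v = q k 1) :
    WellCovered G ∧ _root_.indepNum G = m + 2 * s + t := by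
  have hpiece : ∀ v, ∃! p, v ∈ sqcPiece G x c q p := by
    intro v
    convert hpart v using 3 with p
    rcases p with i | j | k <;> rfl
  have hcard : ∀ S, IsMaxIndepOn G Set.univ S → S.ncard = m + 2 * s + t := by
    intro S hS
    have h4 (k : Fin t) : (S ∩ {q k 0, q k 1}).ncard = 1 :=
      hS.ncard_inter_cycle4 (hq k).1 (hq k).2.1 (hq k).2.2.1
    rw [ncard_eq_sum_ncard_inter_of_existsUnique_mem hpiece S, Fintype.sum_sum_type,
      Fintype.sum_sum_type]
    simp only [sqcPiece, hS.ncard_inter_closedNbhd (hx _), hS.ncard_inter_range_basic5 (hc _), h4,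
      Finset.sum_const, Finset.card_univ, Fintype.card_fin, smul_eq_mul]
    ring
  obtain ⟨S, hS, hSα⟩ := exists_isMaxIndepOn_ncard_eq_indepNum G
  exact ⟨fun S T hS hT => (hcard S hS).trans (hcard T hT).symm, hSα ▸ hcard S hS⟩
end
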